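/- (Abstract convergence of quasi-minimisers.) Let X, Y, B be real normed spaces, T : X → Y and γ : X → B continuous linear maps, X₀ := ker(γ), f : X → ℝ a continuous linear functional, and N : X → ℝ another norm on X such that ‖x‖_X = N(x) + ‖T x‖_Y for all x ∈ X. Assume: every bounded sequence in X has a weakly convergent subsequence; whenever (x_n) converges weakly to x in X, N(x_n − x) → 0; (A_n) is an increasing sequence of subsets of X with ⋃_{n ∈ ℕ} (A_n ∩ X₀) dense in X₀ in norm; E : X → ℝ is bounded from below, weakly sequentially lower semicontinuous, norm-continuous, satisfies E(x) ≥ c₁ ‖T x‖_Y^p − c₂ for constants c₁ > 0, c₂ ∈ ℝ, p > 1, and has a unique minimiser u over the set X₀ of the functional x ↦ E(x) − f(x) (i.e. u ∈ X₀ minimises E − f over X₀, and it is the only such minimiser); for every r ∈ ℝ the set {x ∈ ker(T) : ‖γ(x)‖_B² − f(x) ≤ r} is bounded in X; and for every r ∈ ℝ the set {x ∈ X : E(x) + ‖γ(x)‖_B² − f(x) ≤ r} is weakly sequentially closed and star-shaped with center 0. Define F_n : X → (−∞, ∞] by F_n(x) = E(x) + n ‖γ(x)‖_B² − f(x) if x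 ∈ A_n and F_n(x) = ∞ otherwise. Then every sequence (x_n) of quasi-minimisers of (F_n) converges weakly in X to u. -/

import Mathlib

open Filter Topology

/-- A sequence `x` in a normed space weakly converges to `x₀` if `φ (x n) → φ x₀`
for every continuous linear functional `φ`. -/
def WeaklyConvergesTo {X : Type*} [NormedAddCommGroup X] [NormedSpace ℝ X]
    (x : ℕ → X) (x₀ : X) : Prop :=
  ∀ φ : X →L[ℝ] ℝ, Tendsto (fun n => φ (x n)) atTop (𝓝 (φ x₀))

/-!
Comparing `F n` at a point of `A k ∩ ker γ` close to `u` with the quasi-minimisers gives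
`E xₙ + n ‖γ xₙ‖² - f xₙ ≤ E u - f u + o(1)`. Hence the `xₙ` eventually lie in a sublevel set
`S = {E + ‖γ‖² - f ≤ r}`, which is bounded: otherwise the normalised points of `S` would (by
coercivity of `E` in `T` with `p > 1`) have `T`-part tending to `0`, so that, weak convergence
implying convergence in `N`, a subsequence converges in norm to a unit vector of `ker T` whose
whole ray lies in `S`, contradicting the boundedness of `S ∩ ker T`. So `‖γ xₙ‖² = O(1/n)`, and
by weak lower semicontinuity every weak cluster point of `(xₙ)` minimises `E - f` on `ker γ`,
hence equals `u`.
-/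

open Set Bornology

section WeakTopology

variable {X : Type*} [NormedAddCommGroup X] [NormedSpace ℝ X]

def IsWeaklySeqClosed (S : Set X) : Prop :=
  ∀ (x : ℕ → X) (x₀ : X), (∀ n, x n ∈ S) → WeaklyConvergesTo x x₀ → x₀ ∈ S

def WeaklySeqLowerSemicontinuous (E : X → ℝ) : Prop :=
  ∀ (x₀ : X) (x : ℕ → X), WeaklyConvergesTo x x₀ →
    (E x₀ : EReal) ≤ liminf (fun n => (E (x n) : EReal)) atTop

variable (X) in
def BoundedWeaklySeqCompact : Prop :=
  ∀ x : ℕ → X, IsBounded (range x) →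
    ∃ (φ : ℕ → ℕ) (x₀ : X), StrictMono φ ∧ WeaklyConvergesTo (x ∘ φ) x₀

namespace WeaklyConvergesTo

variable {V : Type*} [NormedAddCommGroup V] [NormedSpace ℝ V] {x : ℕ → X} {x₀ : X}

theorem of_tendsto (h : Tendsto x atTop (𝓝 x₀)) : WeaklyConvergesTo x x₀ :=
  fun φ => (φ.continuous.tendsto x₀).comp h

theorem map_eq_zero_of_tendsto_norm (hw : WeaklyConvergesTo x x₀) (S : X →L[ℝ] V)
    (h0 : Tendsto (fun n => ‖S (x n)‖) atTop (𝓝 0)) : S x₀ = 0 := by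
  refine SeparatingDual.eq_zero_of_forall_dual_eq_zero (R := ℝ) fun ψ => ?_
  have hψ : Tendsto (fun n => ψ (S (x n))) atTop (𝓝 0) := by
    refine tendsto_zero_iff_norm_tendsto_zero.2 <|
      squeeze_zero (fun n => norm_nonneg _) (fun n => ψ.le_opNorm _) ?_
    simpa using h0.const_mul ‖ψ‖
  exact tendsto_nhds_unique (hw (ψ.comp S)) hψ

theorem tendsto_of_tendsto_norm_apply {Y : Type*} [NormedAddCommGroup Y] [NormedSpace ℝ Y]
    (T : X →L[ℝ] Y) {N : X → ℝ} (hnorm : ∀ x, ‖x‖ = N x + ‖T x‖)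
    (hw : WeaklyConvergesTo x x₀) (hN : Tendsto (fun n => N (x n - x₀)) atTop (𝓝 0))
    (hT : Tendsto (fun n => ‖T (x n)‖) atTop (𝓝 0)) : Tendsto x atTop (𝓝 x₀) := by
  have hTx₀ : T x₀ = 0 := hw.map_eq_zero_of_tendsto_norm T hT
  rw [tendsto_iff_norm_sub_tendsto_zero]
  simp_rw [hnorm, map_sub, hTx₀, sub_zero]
  simpa using hN.add hT

end WeaklyConvergesTo

theorem IsWeaklySeqClosed.isClosed {S : Set X} (hS : IsWeaklySeqClosed S) : IsClosed S :=
  IsSeqClosed.isClosed fun x x₀ hx h => hS x x₀ hx (.of_tendsto h)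

theorem WeaklySeqLowerSemicontinuous.sub_le_of_eventually_le {E : X → ℝ}
    (hE : WeaklySeqLowerSemicontinuous E) (f : X →L[ℝ] ℝ) {x : ℕ → X} {x₀ : X}
    (hw : WeaklyConvergesTo x x₀) {m : ℝ}
    (h : ∀ ε > 0, ∀ᶠ n in atTop, E (x n) - f (x n) ≤ m + ε) : E x₀ - f x₀ ≤ m := by
  refine le_of_forall_pos_le_add fun ε hε => ?_
  have hlim : Tendsto (fun n => ((m + ε + f (x n) : ℝ) : EReal)) atTop
      (𝓝 ((m + ε + f x₀ : ℝ) : EReal)) :=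
    (continuous_coe_real_ereal.tendsto _).comp (tendsto_const_nhds.add (hw f))
  have hle : (E x₀ : EReal) ≤ ((m + ε + f x₀ : ℝ) : EReal) :=
    calc (E x₀ : EReal) ≤ liminf (fun n => (E (x n) : EReal)) atTop := hE x₀ x hw
      _ ≤ liminf (fun n => ((m + ε + f (x n) : ℝ) : EReal)) atTop :=
        liminf_le_liminf <| (h ε hε).mono fun n hn => EReal.coe_le_coe_iff.2 (by linarith)
      _ = _ := hlim.liminf_eq
  linarith [EReal.coe_le_coe_iff.1 hle]

theorem weaklyConvergesTo_of_unique_subseq_limit (hcompact : BoundedWeaklySeqCompact X)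
    {x : ℕ → X} (hx : IsBounded (range x)) {u : X}
    (h : ∀ (φ : ℕ → ℕ) (x₀ : X), Tendsto φ atTop atTop → WeaklyConvergesTo (x ∘ φ) x₀ → x₀ = u) :
    WeaklyConvergesTo x u := by
  intro ψ
  refine tendsto_of_subseq_tendsto fun ns hns => ?_
  obtain ⟨ms, x₀, hms, hw⟩ := hcompact (x ∘ ns) (hx.subset (range_comp_subset_range ns x))
  obtain rfl := h (ns ∘ ms) x₀ (hns.comp hms.tendsto_atTop) hw
  exact ⟨ms, hw ψ⟩

end WeakTopology

theorem isBounded_range_of_eventually_mem {X : Type*} [PseudoMetricSpace X] {x : ℕ → X}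
    {S : Set X} (hS : IsBounded S) (h : ∀ᶠ n in atTop, x n ∈ S) : IsBounded (range x) := by
  obtain ⟨n₀, hn₀⟩ := eventually_atTop.1 h
  refine (hS.union ((finite_Iio n₀).image x).isBounded).subset ?_
  rintro _ ⟨n, rfl⟩
  rcases le_or_gt n₀ n with hn | hn
  exacts [.inl (hn₀ n hn), .inr ⟨n, hn, rfl⟩]

theorem tendsto_zero_of_eventually_natCast_mul_sq_le {a : ℕ → ℝ} {D : ℝ} (ha : ∀ n, 0 ≤ a n)
    (h : ∀ᶠ n : ℕ in atTop, (n : ℝ) * a n ^ 2 ≤ D) : Tendsto a atTop (𝓝 0) := by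
  have hsq : Tendsto (fun n => a n ^ 2) atTop (𝓝 0) := by
    refine squeeze_zero' (.of_forall fun n => sq_nonneg _) ?_
      (tendsto_const_div_atTop_nhds_zero_nat D)
    filter_upwards [h, eventually_gt_atTop (0 : ℕ)] with n hn hn0
    rw [le_div_iff₀ (by exact_mod_cast hn0)]
    linarith
  simpa [Real.sqrt_sq (ha _)] using hsq.sqrt

theorem eventually_add_mul_lt_mul_rpow {p a : ℝ} (hp : 1 < p) (ha : 0 < a) (b d : ℝ) :
    ∀ᶠ s : ℝ in atTop, b + d * s < a * s ^ p := by
  have hlim : Tendsto (fun s : ℝ => s * (a * s ^ (p - 1) - d)) atTop atTop :=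
    tendsto_id.atTop_mul_atTop₀ <| tendsto_atTop_add_const_right _ _ <|
      (tendsto_rpow_atTop (by linarith)).const_mul_atTop ha
  filter_upwards [hlim.eventually_gt_atTop b, eventually_gt_atTop 0] with s hs hs0
  rw [Real.rpow_sub_one hs0.ne'] at hs
  field_simp at hs
  linarith

section Coercivity

variable {X Y : Type*} [NormedAddCommGroup X] [NormedSpace ℝ X]
  [NormedAddCommGroup Y] [NormedSpace ℝ Y]

theorem tendsto_norm_apply_zero_of_eventually_smul_le {y : ℕ → X} (hy : ∀ j, ‖y j‖ = 1)
    (T : X →L[ℝ] Y) (f : X →L[ℝ] ℝ) {c₁ p R : ℝ} (hc₁ : 0 < c₁) (hp : 1 < p)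
    (h : ∀ s : ℝ, 0 ≤ s → ∀ᶠ j in atTop, c₁ * ‖T (s • y j)‖ ^ p - f (s • y j) ≤ R) :
    Tendsto (fun j => ‖T (y j)‖) atTop (𝓝 0) := by
  refine Metric.tendsto_nhds.2 fun ε hε => ?_
  obtain ⟨s, hs, hs0⟩ := ((eventually_add_mul_lt_mul_rpow hp
    (mul_pos hc₁ (Real.rpow_pos_of_pos hε p)) R ‖f‖).and (eventually_gt_atTop 0)).exists
  filter_upwards [h s hs0.le] with j hj
  rw [Real.dist_0_eq_abs, abs_norm]
  by_contra! hTy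
  have hf : f (s • y j) ≤ ‖f‖ * s := by
    simpa [norm_smul, hy j, abs_of_pos hs0] using (Real.le_norm_self _).trans (f.le_opNorm (s • y j))
  have hT : c₁ * ε ^ p * s ^ p ≤ c₁ * ‖T (s • y j)‖ ^ p := by
    rw [mul_assoc, ← Real.mul_rpow hε.le hs0.le, map_smul, norm_smul, Real.norm_of_nonneg hs0.le,
      mul_comm s]
    gcongr
  linarith

theorem exists_norm_eq_one_ray_subset_of_not_isBounded {S : Set X} (hS : ¬IsBounded S)
    (hstar : StarConvex ℝ 0 S) (hclosed : IsWeaklySeqClosed S)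
    (hcompact : BoundedWeaklySeqCompact X) (T : X →L[ℝ] Y) {N : X → ℝ}
    (hnorm : ∀ x, ‖x‖ = N x + ‖T x‖)
    (hNweak : ∀ (x : ℕ → X) (x₀ : X), WeaklyConvergesTo x x₀ →
      Tendsto (fun n => N (x n - x₀)) atTop (𝓝 0))
    (f : X →L[ℝ] ℝ) {c₁ p R : ℝ} (hc₁ : 0 < c₁) (hp : 1 < p)
    (hcoer : ∀ z ∈ S, c₁ * ‖T z‖ ^ p - f z ≤ R) :
    ∃ y₀ : X, ‖y₀‖ = 1 ∧ T y₀ = 0 ∧ ∀ s : ℝ, 0 ≤ s → s • y₀ ∈ S := by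
  simp only [isBounded_iff_forall_norm_le, not_exists, not_forall, not_le] at hS
  choose w hwS hw using fun j : ℕ => hS j
  have hw0 : ∀ j, 0 < ‖w j‖ := fun j => (Nat.cast_nonneg j).trans_lt (hw j)
  set y : ℕ → X := fun j => ‖w j‖⁻¹ • w j
  have hy : ∀ j, ‖y j‖ = 1 := fun j => norm_smul_inv_norm (norm_pos_iff.1 (hw0 j))
  have hray : ∀ s : ℝ, 0 ≤ s → ∀ᶠ j in atTop, s • y j ∈ S := by
    intro s hs
    filter_upwards [eventually_ge_atTop ⌈s⌉₊] with j hj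
    have hsw : s ≤ ‖w j‖ := (Nat.le_ceil s).trans ((Nat.cast_le.2 hj).trans (hw j).le)
    rw [smul_smul]
    exact starConvex_zero_iff.1 hstar (hwS j) (by positivity)
      (mul_inv_le_one_of_le₀ hsw (norm_nonneg _))
  have hTy : Tendsto (fun j => ‖T (y j)‖) atTop (𝓝 0) :=
    tendsto_norm_apply_zero_of_eventually_smul_le hy T f hc₁ hp fun s hs =>
      (hray s hs).mono fun j hj => hcoer _ hj
  obtain ⟨φ, y₀, hφ, hwy⟩ := hcompact y <|
    isBounded_iff_forall_norm_le.2 ⟨1, by rintro _ ⟨j, rfl⟩; exact (hy j).le⟩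
  have hTyφ := hTy.comp hφ.tendsto_atTop
  have hlim : Tendsto (y ∘ φ) atTop (𝓝 y₀) :=
    hwy.tendsto_of_tendsto_norm_apply T hnorm (hNweak _ _ hwy) hTyφ
  refine ⟨y₀, tendsto_nhds_unique hlim.norm ?_, hwy.map_eq_zero_of_tendsto_norm T hTyφ,
    fun s hs => hclosed.isClosed.mem_of_tendsto (hlim.const_smul s)
      (hφ.tendsto_atTop.eventually (hray s hs))⟩
  simp only [Function.comp_apply, hy, tendsto_const_nhds]

theorem isBounded_of_isBounded_inter_ker {S : Set X} (hstar : StarConvex ℝ 0 S)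
    (hclosed : IsWeaklySeqClosed S) (hcompact : BoundedWeaklySeqCompact X) (T : X →L[ℝ] Y)
    {N : X → ℝ} (hnorm : ∀ x, ‖x‖ = N x + ‖T x‖)
    (hNweak : ∀ (x : ℕ → X) (x₀ : X), WeaklyConvergesTo x x₀ →
      Tendsto (fun n => N (x n - x₀)) atTop (𝓝 0))
    (f : X →L[ℝ] ℝ) {c₁ p R : ℝ} (hc₁ : 0 < c₁) (hp : 1 < p)
    (hcoer : ∀ z ∈ S, c₁ * ‖T z‖ ^ p - f z ≤ R) (hker : IsBounded (S ∩ {x | T x = 0})) :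
    IsBounded S := by
  by_contra hS
  obtain ⟨y₀, hy₀, hTy₀, hray⟩ := exists_norm_eq_one_ray_subset_of_not_isBounded hS hstar
    hclosed hcompact T hnorm hNweak f hc₁ hp hcoer
  obtain ⟨C, hC⟩ := isBounded_iff_forall_norm_le.1 hker
  have hs : 0 ≤ max C 0 + 1 := by positivity
  have hCs := hC _ ⟨hray _ hs, show T _ = 0 by simp [hTy₀]⟩
  rw [norm_smul, hy₀, mul_one, Real.norm_of_nonneg hs] at hCs
  linarith [le_max_left C 0]

end Coercivity

theorem eventually_penalised_le_of_quasiMin {X B : Type*} [NormedAddCommGroup X]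
    [NormedSpace ℝ X] [NormedAddCommGroup B] [NormedSpace ℝ B] {A : ℕ → Set X} (hA : Monotone A)
    (γ : X →L[ℝ] B) (f : X →L[ℝ] ℝ) {E : X → ℝ} (hE : Continuous E) {u : X}
    (hu : u ∈ closure (⋃ n, A n ∩ {x | γ x = 0})) {F : ℕ → X → EReal}
    (hFmem : ∀ n x, x ∈ A n → F n x = ((E x + n * ‖γ x‖ ^ 2 - f x : ℝ) : EReal))
    (hFnotmem : ∀ n x, x ∉ A n → F n x = ⊤) {x : ℕ → X} {δ : ℕ → ℝ}
    (hδ : Tendsto δ atTop (𝓝 0)) (hquasi : ∀ n, F n (x n) ≤ (⨅ z, F n z) + (δ n : EReal))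
    {ε : ℝ} (hε : 0 < ε) :
    ∀ᶠ n in atTop, E (x n) + n * ‖γ (x n)‖ ^ 2 - f (x n) ≤ E u - f u + ε := by
  obtain ⟨a, haE, haA⟩ : ∃ a, E a - f a < E u - f u + ε / 2 ∧ a ∈ ⋃ n, A n ∩ {x | γ x = 0} :=
    mem_closure_iff.1 hu {x | E x - f x < E u - f u + ε / 2}
      (isOpen_lt (hE.sub f.continuous) continuous_const) (by change E u - f u < _; linarith)
  obtain ⟨k, hak, hγa⟩ := mem_iUnion.1 haA
  filter_upwards [eventually_ge_atTop k, hδ.eventually (gt_mem_nhds (half_pos hε))]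
    with n hn hδn
  have hFx : F n (x n) ≤ ((E a - f a + δ n : ℝ) : EReal) :=
    calc F n (x n) ≤ F n a + (δ n : EReal) := (hquasi n).trans (by gcongr; exact iInf_le _ a)
      _ = ((E a - f a + δ n : ℝ) : EReal) := by
        rw [hFmem n a (hA hn hak), show γ a = 0 from hγa]
        norm_num
  have hxA : x n ∈ A n := by
    by_contra hxA
    rw [hFnotmem n _ hxA, top_le_iff] at hFx
    exact EReal.coe_ne_top _ hFx
  rw [hFmem n _ hxA, EReal.coe_le_coe_iff] at hFx
  linarith

theorem abstract_convergence_of_quasi_minimisers_general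
    {X Y B : Type*} [NormedAddCommGroup X] [NormedSpace ℝ X]
    [NormedAddCommGroup Y] [NormedSpace ℝ Y]
    [NormedAddCommGroup B] [NormedSpace ℝ B]
    (T : X →L[ℝ] Y) (γ : X →L[ℝ] B) (f : X →L[ℝ] ℝ) (N : X → ℝ)
    (hnorm : ∀ x : X, ‖x‖ = N x + ‖T x‖)
    (hcompact : ∀ x : ℕ → X, Bornology.IsBounded (Set.range x) →
      ∃ (φ : ℕ → ℕ) (x₀ : X), StrictMono φ ∧ WeaklyConvergesTo (x ∘ φ) x₀)
    (hNweak : ∀ (x : ℕ → X) (x₀ : X), WeaklyConvergesTo x x₀ →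
      Tendsto (fun n => N (x n - x₀)) atTop (𝓝 0))
    (A : ℕ → Set X) (hAmono : ∀ n, A n ⊆ A (n + 1))
    (hdense : {x : X | γ x = 0} ⊆ closure (⋃ n : ℕ, A n ∩ {x : X | γ x = 0}))
    (E : X → ℝ)
    (hEbdd : ∃ c : ℝ, ∀ x : X, c ≤ E x)
    (hElsc : ∀ (x : X) (xseq : ℕ → X), WeaklyConvergesTo xseq x →
      (E x : EReal) ≤ Filter.liminf (fun n => ((E (xseq n) : ℝ) : EReal)) atTop)
    (hEcont : Continuous E)
    (c₁ c₂ p : ℝ) (hc₁ : 0 < c₁) (hp : 1 < p)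
    (hE : ∀ x : X, c₁ * ‖T x‖ ^ p - c₂ ≤ E x)
    (u : X) (hu : γ u = 0)
    (humin : ∀ y : X, γ y = 0 → E u - f u ≤ E y - f y)
    (huuniq : ∀ y : X, γ y = 0 → (∀ z : X, γ z = 0 → E y - f y ≤ E z - f z) → y = u)
    (hker : ∀ r : ℝ, Bornology.IsBounded {x : X | T x = 0 ∧ ‖γ x‖ ^ 2 - f x ≤ r})
    (hMclosed : ∀ r : ℝ, ∀ (x : ℕ → X) (x₀ : X),
      (∀ n, x n ∈ {z : X | E z + ‖γ z‖ ^ 2 - f z ≤ r}) → WeaklyConvergesTo x x₀ →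
        x₀ ∈ {z : X | E z + ‖γ z‖ ^ 2 - f z ≤ r})
    (hMstar : ∀ r : ℝ, ∀ x ∈ {z : X | E z + ‖γ z‖ ^ 2 - f z ≤ r},
      ∀ t : ℝ, t ∈ Set.Icc (0 : ℝ) 1 → t • x ∈ {z : X | E z + ‖γ z‖ ^ 2 - f z ≤ r})
    (F : ℕ → X → EReal)
    (hFmem : ∀ (n : ℕ) (x : X), x ∈ A n →
      F n x = ((E x + (n : ℝ) * ‖γ x‖ ^ 2 - f x : ℝ) : EReal))
    (hFnotmem : ∀ (n : ℕ) (x : X), x ∉ A n → F n x = ⊤)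
    (xseq : ℕ → X) (δ : ℕ → ℝ)
    (hδ : Tendsto δ atTop (𝓝 0))
    (hquasi : ∀ n, F n (xseq n) ≤ (⨅ z : X, F n z) + (δ n : EReal)) :
    WeaklyConvergesTo xseq u := by
  obtain ⟨c, hc⟩ := hEbdd
  have hlim : ∀ ε > 0, ∀ᶠ n in atTop,
      E (xseq n) + n * ‖γ (xseq n)‖ ^ 2 - f (xseq n) ≤ E u - f u + ε := fun ε hε =>
    eventually_penalised_le_of_quasiMin (monotone_nat_of_le_succ hAmono) γ f hEcont (hdense hu)
      hFmem hFnotmem hδ hquasi hε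
  have hSbdd : IsBounded {z | E z + ‖γ z‖ ^ 2 - f z ≤ E u - f u + 1} :=
    isBounded_of_isBounded_inter_ker
      (starConvex_zero_iff.2 fun x hx t ht₀ ht₁ => hMstar _ x hx t ⟨ht₀, ht₁⟩) (hMclosed _)
      hcompact T hnorm hNweak f hc₁ hp (R := E u - f u + 1 + c₂)
      (fun z hz => by linarith [hE z, sq_nonneg ‖γ z‖, hz.out])
      ((hker (E u - f u + 1 - c)).subset fun z ⟨hz, hTz⟩ => ⟨hTz, by linarith [hc z, hz.out]⟩)
  have hbdd : IsBounded (range xseq) := isBounded_range_of_eventually_mem hSbdd <| by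
    filter_upwards [hlim 1 one_pos, eventually_ge_atTop 1] with n hn hn1
    have : ‖γ (xseq n)‖ ^ 2 ≤ n * ‖γ (xseq n)‖ ^ 2 :=
      le_mul_of_one_le_left (sq_nonneg _) (by exact_mod_cast hn1)
    exact show _ ≤ _ by linarith
  obtain ⟨C, hC⟩ := isBounded_iff_forall_norm_le.1 hbdd
  have hfC : ∀ n, f (xseq n) ≤ ‖f‖ * C := fun n =>
    (Real.le_norm_self _).trans <| (f.le_opNorm _).trans <|
      mul_le_mul_of_nonneg_left (hC _ ⟨n, rfl⟩) (norm_nonneg f)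
  have hγ : Tendsto (fun n => ‖γ (xseq n)‖) atTop (𝓝 0) :=
    tendsto_zero_of_eventually_natCast_mul_sq_le (D := E u - f u + 1 - c + ‖f‖ * C)
      (fun n => norm_nonneg _) <| (hlim 1 one_pos).mono fun n hn => by linarith [hc (xseq n), hfC n]
  refine weaklyConvergesTo_of_unique_subseq_limit hcompact hbdd fun φ x₀ hφ hw =>
    huuniq x₀ (hw.map_eq_zero_of_tendsto_norm γ (hγ.comp hφ)) fun z hz => le_trans ?_ (humin z hz)
  refine WeaklySeqLowerSemicontinuous.sub_le_of_eventually_le hElsc f hw fun ε hε => ?_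
  filter_upwards [hφ.eventually (hlim ε hε)] with n hn
  have : 0 ≤ (φ n : ℝ) * ‖γ (xseq (φ n))‖ ^ 2 := by positivity
  simp only [Function.comp_apply]
  linarith

theorem abstract_convergence_of_quasi_minimisers
    {X Y B : Type*} [NormedAddCommGroup X] [NormedSpace ℝ X]
    [NormedAddCommGroup Y] [NormedSpace ℝ Y]
    [NormedAddCommGroup B] [NormedSpace ℝ B]
    (T : X →L[ℝ] Y) (γ : X →L[ℝ] B) (f : X →L[ℝ] ℝ) (N : X → ℝ)
    (hN0 : ∀ x : X, 0 ≤ N x)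
    (hNeq : ∀ x : X, N x = 0 ↔ x = 0)
    (hNadd : ∀ x y : X, N (x + y) ≤ N x + N y)
    (hNsmul : ∀ (c : ℝ) (x : X), N (c • x) = |c| * N x)
    (hnorm : ∀ x : X, ‖x‖ = N x + ‖T x‖)
    (hcompact : ∀ x : ℕ → X, Bornology.IsBounded (Set.range x) →
      ∃ (φ : ℕ → ℕ) (x₀ : X), StrictMono φ ∧ WeaklyConvergesTo (x ∘ φ) x₀)
    (hNweak : ∀ (x : ℕ → X) (x₀ : X), WeaklyConvergesTo x x₀ →
      Tendsto (fun n => N (x n - x₀)) atTop (𝓝 0))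
    (A : ℕ → Set X) (hAmono : ∀ n, A n ⊆ A (n + 1))
    (hdense : {x : X | γ x = 0} ⊆ closure (⋃ n : ℕ, A n ∩ {x : X | γ x = 0}))
    (E : X → ℝ)
    (hEbdd : ∃ c : ℝ, ∀ x : X, c ≤ E x)
    (hElsc : ∀ (x : X) (xseq : ℕ → X), WeaklyConvergesTo xseq x →
      (E x : EReal) ≤ Filter.liminf (fun n => ((E (xseq n) : ℝ) : EReal)) atTop)
    (hEcont : Continuous E)
    (c₁ c₂ p : ℝ) (hc₁ : 0 < c₁) (hp : 1 < p)
    (hE : ∀ x : X, c₁ * ‖T x‖ ^ p - c₂ ≤ E x)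
    (u : X) (hu : γ u = 0)
    (humin : ∀ y : X, γ y = 0 → E u - f u ≤ E y - f y)
    (huuniq : ∀ y : X, γ y = 0 → (∀ z : X, γ z = 0 → E y - f y ≤ E z - f z) → y = u)
    (hker : ∀ r : ℝ, Bornology.IsBounded {x : X | T x = 0 ∧ ‖γ x‖ ^ 2 - f x ≤ r})
    (hMclosed : ∀ r : ℝ, ∀ (x : ℕ → X) (x₀ : X),
      (∀ n, x n ∈ {z : X | E z + ‖γ z‖ ^ 2 - f z ≤ r}) → WeaklyConvergesTo x x₀ →
        x₀ ∈ {z : X | E z + ‖γ z‖ ^ 2 - f z ≤ r})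
    (hMstar : ∀ r : ℝ, ∀ x ∈ {z : X | E z + ‖γ z‖ ^ 2 - f z ≤ r},
      ∀ t : ℝ, t ∈ Set.Icc (0 : ℝ) 1 → t • x ∈ {z : X | E z + ‖γ z‖ ^ 2 - f z ≤ r})
    (F : ℕ → X → EReal)
    (hFmem : ∀ (n : ℕ) (x : X), x ∈ A n →
      F n x = ((E x + (n : ℝ) * ‖γ x‖ ^ 2 - f x : ℝ) : EReal))
    (hFnotmem : ∀ (n : ℕ) (x : X), x ∉ A n → F n x = ⊤)
    (xseq : ℕ → X) (δ : ℕ → ℝ) (hδ0 : ∀ n, 0 ≤ δ n)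
    (hδ : Tendsto δ atTop (𝓝 0))
    (hquasi : ∀ n, F n (xseq n) ≤ (⨅ z : X, F n z) + (δ n : EReal)) :
    WeaklyConvergesTo xseq u :=
  abstract_convergence_of_quasi_minimisers_general T γ f N hnorm hcompact hNweak A hAmono hdense E
    hEbdd hElsc hEcont c₁ c₂ p hc₁ hp hE u hu humin huuniq hker hMclosed hMstar F hFmem hFnotmem
    xseq δ hδ hquasi
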